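/- Let ρ > 1, δ₃ > 0, h > 0, and define J₁'(n,z) = e^{R_n^ρ z^ρ}·Γ(1+n/ρ)/(R_n^n z^n). Then sup over z ∈ Ω₂ of |J₁'(n,z)| tends to 0 as n → ∞, where Ω₂ = {z = re^{iφ} : r > 0, |φ| ≤ π/(2ρ) − δ₃, r^ρ cos(ρφ) − 1 − ρ log r ≤ −h}. -/

import Mathlib

open Complex Real Filter Topology

/-- `R_n = Γ(1+n/ρ)/Γ(1+(n-1)/ρ)`. -/
noncomputable def Rn (ρ : ℝ) (n : ℕ) : ℝ :=
  Real.Gamma (1 + (n : ℝ) / ρ) / Real.Gamma (1 + ((n : ℝ) - 1) / ρ)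


/-- `J₁·(n,z) = e^{R_n^ρ z^ρ}·Γ(1+n/ρ)/(R_n^n z^n)`. -/
noncomputable def J1 (ρ : ℝ) (n : ℕ) (z : ℂ) : ℂ :=
  Complex.exp (((Rn ρ n ^ ρ : ℝ) : ℂ) * z ^ (ρ : ℂ)) * (Real.Gamma (1 + (n : ℝ) / ρ) : ℂ) /
    ((Rn ρ n : ℂ) ^ n * z ^ n)

/-!
Put `x_n = 1 + (n - 1)/ρ`, so that `R_n = Γ(x_n + 1/ρ)/Γ(x_n)`. Log-convexity of `Γ` (Wendel's
inequalities) gives `x_n - 1 ≤ R_n^ρ ≤ x_n` and, after telescoping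
`log Γ(1 + n/ρ) = ∑_{k ≤ n} log R_k`, also `log Γ(1 + n/ρ) - n log R_n + R_n^ρ ≤ log x_n + 2`.
On `Ω₂` we have `Re (R_n^ρ z^ρ) = R_n^ρ r^ρ cos ρφ ≤ R_n^ρ (1 + ρ log r - h)` and
`|ρ R_n^ρ - n| ≤ ρ`, whence `log |J₁'(n,z)| ≤ log x_n + 2 + |ρ log r| + h - h x_n`.
Finally `log r` is bounded on `Ω₂`: there `cos ρφ ≥ sin ρδ₃ > 0`, so `u = ρ log r` satisfies
`sin (ρδ₃) eᵘ ≤ 1 + u`.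
-/

namespace Real

variable {x s : ℝ}

theorem log_Gamma_add_sub_log_Gamma_le (hx : 0 < x) (hs0 : 0 ≤ s) (hs1 : s ≤ 1) :
    log (Gamma (x + s)) - log (Gamma x) ≤ s * log x := by
  have key := convexOn_log_Gamma.2 (Set.mem_Ioi.mpr hx)
    (Set.mem_Ioi.mpr (by linarith : 0 < x + 1)) (sub_nonneg.mpr hs1) hs0 (by ring)
  simp only [smul_eq_mul, Function.comp_apply] at key
  rw [show (1 - s) * x + s * (x + 1) = x + s by ring, Gamma_add_one hx.ne',
    log_mul hx.ne' (Gamma_pos_of_pos hx).ne'] at key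
  linarith

theorem log_add_sub_log_le (hx : 0 < x) (hs : 0 ≤ s) : log (x + s) - log x ≤ s / x := by
  have hxs : 0 < x + s := by linarith
  rw [← log_div hxs.ne' hx.ne']
  calc log ((x + s) / x) ≤ (x + s) / x - 1 := log_le_sub_one_of_pos (div_pos hxs hx)
    _ = s / x := by field_simp; ring

theorem le_log_Gamma_add_sub_log_Gamma (hx : 0 < x) (hs0 : 0 ≤ s) (hs1 : s ≤ 1) :
    s * log x - (1 - s) * s / x ≤ log (Gamma (x + s)) - log (Gamma x) := by
  have hxs : 0 < x + s := by linarith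
  have key := convexOn_log_Gamma.2 (Set.mem_Ioi.mpr hxs)
    (Set.mem_Ioi.mpr (by linarith : 0 < x + s + 1)) hs0 (sub_nonneg.mpr hs1) (by ring)
  simp only [smul_eq_mul, Function.comp_apply] at key
  rw [show s * (x + s) + (1 - s) * (x + s + 1) = x + 1 by ring, Gamma_add_one hx.ne',
    Gamma_add_one hxs.ne', log_mul hx.ne' (Gamma_pos_of_pos hx).ne',
    log_mul hxs.ne' (Gamma_pos_of_pos hxs).ne'] at key
  have := mul_le_mul_of_nonneg_left (log_add_sub_log_le hx hs0) (sub_nonneg.mpr hs1)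
  rw [mul_div_assoc]
  linarith

theorem sin_le_cos_of_abs_le {a θ : ℝ} (ha : 0 ≤ a) (hθ : |θ| ≤ π / 2 - a) : sin a ≤ cos θ := by
  rw [← cos_pi_div_two_sub, ← cos_abs θ]
  exact cos_le_cos_of_nonneg_of_le_pi (abs_nonneg θ) (by linarith [pi_pos]) hθ

theorem abs_le_of_mul_exp_le_one_add {c u : ℝ} (hc0 : 0 < c) (hc1 : c ≤ 1)
    (h : c * exp u ≤ 1 + u) : |u| ≤ 4 / c := by
  have hu : -1 < u := by nlinarith [exp_pos u]
  have h4 : 4 ≤ 4 / c := by rw [le_div_iff₀ hc0]; linarith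
  refine abs_le.mpr ⟨by linarith, (le_div_iff₀ hc0).mpr ?_⟩
  rcases le_total u 0 with hu0 | hu0
  · nlinarith
  · nlinarith [quadratic_le_exp_of_nonneg hu0]

end Real

noncomputable def Xn (ρ : ℝ) (n : ℕ) : ℝ := 1 + ((n : ℝ) - 1) / ρ

section

variable {ρ : ℝ} {n : ℕ}

lemma mul_Xn (hρ : ρ ≠ 0) (n : ℕ) : ρ * Xn ρ n = ρ + n - 1 := by
  unfold Xn; field_simp; ring

lemma Xn_succ (n : ℕ) : Xn ρ (n + 1) = 1 + n / ρ := by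
  simp [Xn]

lemma Xn_add_inv (hρ : ρ ≠ 0) (n : ℕ) : Xn ρ n + ρ⁻¹ = 1 + n / ρ := by
  unfold Xn; field_simp; ring

lemma one_le_Xn (hρ : 0 < ρ) (hn : 1 ≤ n) : 1 ≤ Xn ρ n := by
  have : (1 : ℝ) ≤ n := by exact_mod_cast hn
  unfold Xn
  linarith [div_nonneg (sub_nonneg.mpr this) hρ.le]

lemma tendsto_Xn_atTop (hρ : 0 < ρ) : Tendsto (Xn ρ) atTop atTop :=
  tendsto_atTop_add_const_left _ _ <|
    (tendsto_atTop_add_const_right _ _ tendsto_natCast_atTop_atTop).atTop_div_const hρ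

lemma one_le_mul_log_Xn_succ_sub (hρ : 0 < ρ) (hn : 1 ≤ n) :
    1 ≤ (ρ + n) * (Real.log (Xn ρ (n + 1)) - Real.log (Xn ρ n)) := by
  have hx := one_le_Xn hρ hn
  have hx' := one_le_Xn hρ (by omega : 1 ≤ n + 1)
  have hρn : 0 < ρ + n := by positivity
  have hratio : (Xn ρ (n + 1) / Xn ρ n)⁻¹ = 1 - (ρ + n)⁻¹ := by
    rw [inv_div, ← mul_div_mul_left _ _ hρ.ne', mul_Xn hρ.ne', mul_Xn hρ.ne']
    push_cast
    rw [show ρ + ((n : ℝ) + 1) - 1 = ρ + n by ring]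
    field_simp
  have := one_sub_inv_le_log_of_pos
    (div_pos (by linarith) (by linarith) : 0 < Xn ρ (n + 1) / Xn ρ n)
  rw [hratio, log_div (by linarith) (by linarith)] at this
  calc (1 : ℝ) = (ρ + n) * (1 - (1 - (ρ + n)⁻¹)) := by field_simp; ring
    _ ≤ _ := by gcongr

lemma Rn_pos (hρ : 0 < ρ) (hn : 1 ≤ n) : 0 < Rn ρ n := by
  have hx := one_le_Xn hρ hn
  exact div_pos (Gamma_pos_of_pos (by positivity))
    (Gamma_pos_of_pos (by unfold Xn at hx; linarith))

lemma log_Rn (hρ : 0 < ρ) (hn : 1 ≤ n) :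
    Real.log (Rn ρ n) = Real.log (Gamma (Xn ρ n + ρ⁻¹)) - Real.log (Gamma (Xn ρ n)) := by
  have hx := one_le_Xn hρ hn
  rw [Xn_add_inv hρ.ne', Rn, log_div (Gamma_pos_of_pos (by positivity)).ne'
    (Gamma_pos_of_pos (by unfold Xn at hx; linarith)).ne']
  rfl

lemma mul_log_Rn_le_log_Xn (hρ : 1 ≤ ρ) (hn : 1 ≤ n) :
    ρ * Real.log (Rn ρ n) ≤ Real.log (Xn ρ n) := by
  have hρ0 : 0 < ρ := by linarith
  have h := log_Gamma_add_sub_log_Gamma_le (zero_lt_one.trans_le (one_le_Xn hρ0 hn))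
    (inv_nonneg.mpr hρ0.le) (inv_le_one_of_one_le₀ hρ)
  rw [← log_Rn hρ0 hn] at h
  calc ρ * Real.log (Rn ρ n) ≤ ρ * (ρ⁻¹ * Real.log (Xn ρ n)) := by gcongr
    _ = Real.log (Xn ρ n) := by field_simp

lemma log_Xn_sub_inv_le_mul_log_Rn (hρ : 1 ≤ ρ) (hn : 1 ≤ n) :
    Real.log (Xn ρ n) - 1 / Xn ρ n ≤ ρ * Real.log (Rn ρ n) := by
  have hρ0 : 0 < ρ := by linarith
  have hx := zero_lt_one.trans_le (one_le_Xn hρ0 hn)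
  have h := le_log_Gamma_add_sub_log_Gamma hx (inv_nonneg.mpr hρ0.le) (inv_le_one_of_one_le₀ hρ)
  rw [← log_Rn hρ0 hn] at h
  have hs : (1 - ρ⁻¹) * ρ⁻¹ / Xn ρ n ≤ ρ⁻¹ / Xn ρ n := by
    gcongr; nlinarith [inv_pos.mpr hρ0]
  calc Real.log (Xn ρ n) - 1 / Xn ρ n = ρ * (ρ⁻¹ * Real.log (Xn ρ n) - ρ⁻¹ / Xn ρ n) := by
        field_simp
    _ ≤ ρ * Real.log (Rn ρ n) := by gcongr; linarith

lemma Rn_rpow_le_Xn (hρ : 1 ≤ ρ) (hn : 1 ≤ n) : Rn ρ n ^ ρ ≤ Xn ρ n := by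
  have hρ0 : 0 < ρ := by linarith
  rw [Real.rpow_def_of_pos (Rn_pos hρ0 hn), mul_comm,
    ← Real.exp_log (zero_lt_one.trans_le (one_le_Xn hρ0 hn))]
  exact exp_le_exp.mpr (mul_log_Rn_le_log_Xn hρ hn)

lemma Xn_sub_one_le_Rn_rpow (hρ : 1 ≤ ρ) (hn : 1 ≤ n) : Xn ρ n - 1 ≤ Rn ρ n ^ ρ := by
  have hρ0 : 0 < ρ := by linarith
  have hx := zero_lt_one.trans_le (one_le_Xn hρ0 hn)
  rw [Real.rpow_def_of_pos (Rn_pos hρ0 hn), mul_comm]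
  calc Xn ρ n - 1 = Xn ρ n * (-(1 / Xn ρ n) + 1) := by field_simp; ring
    _ ≤ Xn ρ n * Real.exp (-(1 / Xn ρ n)) := by gcongr; exact Real.add_one_le_exp _
    _ = Real.exp (Real.log (Xn ρ n) - 1 / Xn ρ n) := by
        rw [Real.exp_sub, Real.exp_log hx, Real.exp_neg]; field_simp
    _ ≤ Real.exp (ρ * Real.log (Rn ρ n)) := exp_le_exp.mpr (log_Xn_sub_inv_le_mul_log_Rn hρ hn)

/-- `log Γ(1 + n/ρ)` telescopes to `∑_{k ≤ n} log R_k ≤ ρ⁻¹ ∑_{k ≤ n} log x_k`, and the right-hand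
side is bounded like the integral `∫_1^{x_n} log t dt = ρ⁻¹ ((ρ + n - 1) log x_n - (n - 1))`. -/
lemma mul_log_Gamma_le (hρ : 1 ≤ ρ) (hn : 1 ≤ n) :
    ρ * Real.log (Real.Gamma (1 + n / ρ)) ≤ (ρ + n) * Real.log (Xn ρ n) - (n - 1) := by
  have hρ0 : 0 < ρ := by linarith
  induction n, hn using Nat.le_induction with
  | base =>
    simpa [Rn, Xn] using mul_log_Rn_le_log_Xn hρ le_rfl
  | succ n hn ih =>
    have hstep := one_le_mul_log_Xn_succ_sub hρ0 hn
    have hR := mul_log_Rn_le_log_Xn hρ (by omega : 1 ≤ n + 1)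
    have hΓ : Real.Gamma (Xn ρ (n + 1)) = Real.Gamma (1 + n / ρ) := by rw [Xn_succ]
    rw [log_Rn hρ0 (by omega), Xn_add_inv hρ0.ne', hΓ] at hR
    push_cast at hR ⊢
    linarith

lemma log_Gamma_sub_add_Rn_rpow_le (hρ : 1 ≤ ρ) (hn : 1 ≤ n) :
    Real.log (Real.Gamma (1 + n / ρ)) - n * Real.log (Rn ρ n) + Rn ρ n ^ ρ ≤
      Real.log (Xn ρ n) + 2 := by
  have hρ0 : 0 < ρ := by linarith
  have hx := zero_lt_one.trans_le (one_le_Xn hρ0 hn)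
  have hΓ := mul_log_Gamma_le hρ hn
  have hR := mul_le_mul_of_nonneg_left (log_Xn_sub_inv_le_mul_log_Rn hρ hn) n.cast_nonneg
  have hA := mul_le_mul_of_nonneg_left (Rn_rpow_le_Xn hρ hn) hρ0.le
  have hnx : n * (1 / Xn ρ n) ≤ ρ := by
    rw [mul_one_div, div_le_iff₀ hx, mul_Xn hρ0.ne']
    linarith
  rw [mul_Xn hρ0.ne'] at hA
  refine le_of_mul_le_mul_left ?_ hρ0
  linarith

lemma norm_J1 {ρ : ℝ} (hρ : 0 < ρ) {n : ℕ} (hn : 1 ≤ n) (z : ℂ) :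
    ‖J1 ρ n z‖ = Real.exp (Rn ρ n ^ ρ * (‖z‖ ^ ρ * Real.cos (ρ * z.arg))) *
      Real.Gamma (1 + n / ρ) / (Rn ρ n ^ n * ‖z‖ ^ n) := by
  rw [J1, norm_div, norm_mul, norm_mul, norm_pow, norm_pow, Complex.norm_exp,
    Complex.re_ofReal_mul, cpow_ofReal_re, Complex.norm_real, Complex.norm_real,
    Real.norm_of_nonneg (Rn_pos hρ hn).le,
    Real.norm_of_nonneg (Real.Gamma_pos_of_pos (by positivity)).le, mul_comm z.arg]

lemma norm_J1_le {ρ h : ℝ} (hρ : 1 ≤ ρ) (hh : 0 ≤ h) {n : ℕ} (hn : 1 ≤ n) {z : ℂ}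
    (hz : 0 < ‖z‖) (hΩ : ‖z‖ ^ ρ * Real.cos (ρ * z.arg) - 1 - ρ * Real.log ‖z‖ ≤ -h) :
    ‖J1 ρ n z‖ ≤
      Real.exp (2 + |ρ * Real.log ‖z‖| + h) * (Xn ρ n * Real.exp (-h * Xn ρ n)) := by
  have hρ0 : 0 < ρ := by linarith
  have hx := zero_lt_one.trans_le (one_le_Xn hρ0 hn)
  have hR := Rn_pos hρ0 hn
  have hΓ := Real.Gamma_pos_of_pos (by positivity : 0 < 1 + n / ρ)
  set A := Rn ρ n ^ ρ
  set r := ‖z‖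
  have hAρ : |ρ * A - n| ≤ ρ := by
    have h1 := mul_le_mul_of_nonneg_left (Rn_rpow_le_Xn hρ hn) hρ0.le
    have h2 := mul_le_mul_of_nonneg_left (Xn_sub_one_le_Rn_rpow hρ hn) hρ0.le
    rw [mul_Xn hρ0.ne'] at h1
    rw [mul_sub, mul_Xn hρ0.ne'] at h2
    exact abs_le.mpr ⟨by linarith, by linarith⟩
  have hcross : (ρ * A - n) * Real.log r ≤ |ρ * Real.log r| :=
    calc (ρ * A - n) * Real.log r ≤ |ρ * A - n| * |Real.log r| := by
          rw [← abs_mul]; exact le_abs_self _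
      _ ≤ ρ * |Real.log r| := by gcongr
      _ = |ρ * Real.log r| := by rw [abs_mul, abs_of_pos hρ0]
  have hΩ' : r ^ ρ * Real.cos (ρ * z.arg) ≤ 1 + ρ * Real.log r - h := by linarith
  have hexp := mul_le_mul_of_nonneg_left hΩ' (Real.rpow_pos_of_pos hR ρ).le
  have hdecay := mul_le_mul_of_nonneg_left (Xn_sub_one_le_Rn_rpow hρ hn) hh
  have hL := log_Gamma_sub_add_Rn_rpow_le hρ hn
  calc ‖J1 ρ n z‖
      = Real.exp (A * (r ^ ρ * Real.cos (ρ * z.arg)) + Real.log (Real.Gamma (1 + n / ρ))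
          - n * Real.log (Rn ρ n) - n * Real.log r) := by
        rw [norm_J1 hρ0 hn, Real.exp_sub, Real.exp_sub, Real.exp_add, Real.exp_log hΓ,
          ← Real.log_pow, ← Real.log_pow, Real.exp_log (by positivity),
          Real.exp_log (by positivity), div_div]
    _ ≤ Real.exp (2 + |ρ * Real.log r| + h + (Real.log (Xn ρ n) + -h * Xn ρ n)) :=
        Real.exp_le_exp.mpr (by linarith)
    _ = _ := by rw [Real.exp_add (2 + _ + h), Real.exp_add (Real.log _), Real.exp_log hx]

lemma abs_mul_log_le {ρ δ h r φ : ℝ} (hρ : 0 < ρ) (hδ : 0 < δ) (hh : 0 ≤ h) (hr : 0 < r)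
    (hφ : |φ| ≤ π / (2 * ρ) - δ) (hΩ : r ^ ρ * Real.cos (ρ * φ) - 1 - ρ * Real.log r ≤ -h) :
    |ρ * Real.log r| ≤ 4 / Real.sin (ρ * δ) := by
  have hρφ : |ρ * φ| ≤ π / 2 - ρ * δ := by
    calc |ρ * φ| = ρ * |φ| := by rw [abs_mul, abs_of_pos hρ]
      _ ≤ ρ * (π / (2 * ρ) - δ) := by gcongr
      _ = π / 2 - ρ * δ := by field_simp
  have hsin : 0 < Real.sin (ρ * δ) :=
    Real.sin_pos_of_pos_of_lt_pi (by positivity) (by linarith [abs_nonneg (ρ * φ), Real.pi_pos])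
  have hcos := Real.sin_le_cos_of_abs_le (by positivity) hρφ
  refine Real.abs_le_of_mul_exp_le_one_add hsin (Real.sin_le_one _) ?_
  rw [Real.rpow_def_of_pos hr, mul_comm (Real.log r)] at hΩ
  nlinarith [Real.exp_pos (ρ * Real.log r)]

theorem stmt13 (ρ : ℝ) (hρ : 1 < ρ) (δ₃ h : ℝ) (hδ₃ : 0 < δ₃) (hh : 0 < h) :
    ∀ ε > (0 : ℝ), ∃ N : ℕ, ∀ n ≥ N, ∀ z : ℂ,
      0 < ‖z‖ → |z.arg| ≤ π / (2 * ρ) - δ₃ →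
      ‖z‖ ^ ρ * Real.cos (ρ * z.arg) - 1 - ρ * Real.log (‖z‖) ≤ -h →
      ‖J1 ρ n z‖ < ε := by
  intro ε hε
  have hρ0 : 0 < ρ := by linarith
  set C := Real.exp (2 + 4 / Real.sin (ρ * δ₃) + h)
  have hlim : Tendsto (fun n ↦ C * (Xn ρ n * Real.exp (-h * Xn ρ n))) atTop (𝓝 0) := by
    simpa using ((tendsto_rpow_mul_exp_neg_mul_atTop_nhds_zero 1 h hh).comp
      (tendsto_Xn_atTop hρ0)).const_mul _
  obtain ⟨N, hN⟩ := eventually_atTop.mp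
    ((hlim.eventually (gt_mem_nhds hε)).and (eventually_ge_atTop 1))
  refine ⟨N, fun n hn z hz harg hΩ ↦ ?_⟩
  obtain ⟨hεn, hn1⟩ := hN n hn
  calc ‖J1 ρ n z‖
      ≤ Real.exp (2 + |ρ * Real.log ‖z‖| + h) * (Xn ρ n * Real.exp (-h * Xn ρ n)) :=
        norm_J1_le hρ.le hh.le hn1 hz hΩ
    _ ≤ C * (Xn ρ n * Real.exp (-h * Xn ρ n)) := by
        have hx := one_le_Xn hρ0 hn1
        gcongr ?_ * _
        exact Real.exp_le_exp.mpr (by linarith [abs_mul_log_le hρ0 hδ₃ hh.le hz harg hΩ])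
    _ < ε := hεn
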